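/- Let Γ be an alphabet, # a letter not in Γ, k ∈ ℕ, and let u₁,…,u_k, w be words over Γ. Then the language L = { x₀·#·x₁·#·⋯·#·x_k : x₀,…,x_k ∈ Γ* and x₀·u₁·x₁·u₂·x₂ ⋯ u_k·x_k = w } over the alphabet Γ ∪ {#} is regular; moreover it is recognized by a deterministic finite automaton with at most (k+1)·(|w|+1) states. -/

import Mathlib

/-- A deterministic finite automaton with a partial transition function. -/
structure PartialDFA (α : Type*) (σ : Type*) where
  step : σ → α → Option σ
  start : σ
  accept : Set σ

namespace PartialDFA

/-- Evaluation of a partial DFA from an optional state (`none` meaning "stuck"). -/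
def evalFrom {α σ : Type*} (M : PartialDFA α σ) : Option σ → List α → Option σ
  | s, [] => s
  | s, a :: as => M.evalFrom (s.bind fun q => M.step q a) as

/-- The language accepted by a partial DFA. -/
def accepts {α σ : Type*} (M : PartialDFA α σ) : Set (List α) :=
  { w | ∃ q ∈ M.accept, M.evalFrom (some M.start) w = some q }

end PartialDFA

/-- The word `x₀·#·x₁·#·⋯·#·x_k` over the alphabet `Option Γ`, where the separator `#`
is the letter `none` and letters of `Γ` are embedded via `some`. -/
def hashJoin {Γ : Type*} {k : ℕ} (x : Fin (k + 1) → List Γ) : List (Option Γ) :=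
  (x 0).map some ++ (List.finRange k).flatMap fun j => none :: (x j.succ).map some

/-- The solution language `{ x₀·#·x₁·#·⋯·#·x_k : x₀·u₁·x₁·u₂·x₂ ⋯ u_k·x_k = w }` of the
sequential word equation given by the constants `u₁,…,u_k` (here `u 0, …, u (k-1)`)
and `w`. -/
def eqnSolutions {Γ : Type*} {k : ℕ} (u : Fin k → List Γ) (w : List Γ) :
    Set (List (Option Γ)) :=
  { s | ∃ x : Fin (k + 1) → List Γ, s = hashJoin x ∧
      x 0 ++ (List.finRange k).flatMap (fun j => u j ++ x j.succ) = w }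

/-!
The automaton reads `x₀ # x₁ # ⋯ # x_k` while remembering the pair (constants `u_i, …, u_k` still
to be placed, suffix of `w` still to be produced). A letter of `Γ` must be the first letter of that
suffix; `#` places the next constant, which must be a prefix of the suffix. The language accepted
from such a state is again the solution language of a sequential equation (the derivatives of
`listEqnSolutions` are of the same form), and the reachable states are pairs of suffixes, of which
there are at most `(k + 1) * (|w| + 1)`.
-/

namespace PartialDFA

variable {α σ : Type*} (M : PartialDFA α σ)

def acceptsFrom (q : σ) : Set (List α) :=
  { s | ∃ q' ∈ M.accept, M.evalFrom (some q) s = some q' }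

lemma evalFrom_none (s : List α) : M.evalFrom none s = none := by
  induction s with
  | nil => rfl
  | cons a s ih => exact ih

lemma nil_mem_acceptsFrom {q : σ} : [] ∈ M.acceptsFrom q ↔ q ∈ M.accept := by
  simp [acceptsFrom, evalFrom]

lemma cons_mem_acceptsFrom {q : σ} {a : α} {s : List α} :
    a :: s ∈ M.acceptsFrom q ↔ ∃ q', M.step q a = some q' ∧ s ∈ M.acceptsFrom q' := by
  simp only [acceptsFrom, Set.mem_ofPred_eq, evalFrom, Option.bind_some]
  cases M.step q a <;> simp [evalFrom_none]

lemma accepts_eq_acceptsFrom_start : M.accepts = M.acceptsFrom M.start := rfl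

theorem acceptsFrom_eq_of_nil_of_cons (L : σ → Set (List α))
    (hnil : ∀ q, [] ∈ L q ↔ q ∈ M.accept)
    (hcons : ∀ q a s, a :: s ∈ L q ↔ ∃ q', M.step q a = some q' ∧ s ∈ L q') :
    M.acceptsFrom = L := by
  funext q
  ext s
  induction s generalizing q with
  | nil => rw [nil_mem_acceptsFrom, hnil]
  | cons a s ih => simp only [cons_mem_acceptsFrom, hcons, ih]

def restrict (S : Set σ) (hstart : M.start ∈ S)
    (hstep : ∀ q ∈ S, ∀ a q', M.step q a = some q' → q' ∈ S) : PartialDFA α S where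
  step q a := (M.step q a).pmap Subtype.mk (hstep q q.2 a)
  start := ⟨M.start, hstart⟩
  accept := Subtype.val ⁻¹' M.accept

lemma acceptsFrom_restrict {S : Set σ} (hstart : M.start ∈ S)
    (hstep : ∀ q ∈ S, ∀ a q', M.step q a = some q' → q' ∈ S) (q : S) :
    (M.restrict S hstart hstep).acceptsFrom q = M.acceptsFrom q := by
  revert q
  rw [← funext_iff]
  refine acceptsFrom_eq_of_nil_of_cons _ _ (fun q => nil_mem_acceptsFrom M) fun q a s => ?_
  simp only [restrict, cons_mem_acceptsFrom, Option.pmap_eq_some_iff]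
  exact ⟨fun ⟨q', h, hs⟩ => ⟨⟨q', hstep _ q.2 a q' h⟩, ⟨_, _, h, rfl⟩, hs⟩,
    fun ⟨_, ⟨q', _, h, rfl⟩, hs⟩ => ⟨q', h, hs⟩⟩

lemma accepts_restrict {S : Set σ} (hstart : M.start ∈ S)
    (hstep : ∀ q ∈ S, ∀ a q', M.step q a = some q' → q' ∈ S) :
    (M.restrict S hstart hstep).accepts = M.accepts :=
  acceptsFrom_restrict M hstart hstep _

def toDFA : DFA α (Option σ) where
  step o a := o.bind (M.step · a)
  start := some M.start
  accept := some '' M.accept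

lemma toDFA_evalFrom (o : Option σ) (s : List α) : M.toDFA.evalFrom o s = M.evalFrom o s := by
  induction s generalizing o with
  | nil => rfl
  | cons a s ih => exact ih _

lemma toDFA_accepts : M.toDFA.accepts = M.accepts := by
  ext s
  simp only [DFA.mem_accepts, DFA.eval, toDFA_evalFrom]
  simp only [toDFA, accepts, Set.mem_image, eq_comm]
  rfl

lemma isRegular_accepts {σ : Type} [Fintype σ] (M : PartialDFA α σ) :
    Language.IsRegular M.accepts :=
  ⟨Option σ, inferInstance, M.toDFA, M.toDFA_accepts⟩

end PartialDFA

section Solutions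

variable {Γ : Type*}

def listEqnSolutions : List (List Γ) → List Γ → Set (List (Option Γ))
  | [], v => {v.map some}
  | u₀ :: us, v => { s | ∃ y v' s', v = y ++ u₀ ++ v' ∧ s' ∈ listEqnSolutions us v' ∧
      s = y.map some ++ none :: s' }

lemma hashJoin_cons {k : ℕ} (y : List Γ) (x : Fin (k + 1) → List Γ) :
    hashJoin (Fin.cons y x : Fin (k + 2) → List Γ) = y.map some ++ none :: hashJoin x := by
  simp [hashJoin, List.finRange_succ, List.flatMap_map]

lemma eqnSolutions_cons {k : ℕ} (u₀ : List Γ) (us : Fin k → List Γ) (w : List Γ) :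
    eqnSolutions (Fin.cons u₀ us : Fin (k + 1) → List Γ) w =
      { s | ∃ y v' s', w = y ++ u₀ ++ v' ∧ s' ∈ eqnSolutions us v' ∧
        s = y.map some ++ none :: s' } := by
  ext s
  simp only [eqnSolutions, Set.mem_ofPred_eq, Fin.exists_fin_succ_pi (n := k + 1), hashJoin_cons,
    List.finRange_succ, List.flatMap_cons, List.flatMap_map, Fin.cons_zero, Fin.cons_succ]
  constructor
  · rintro ⟨y, x, rfl, rfl⟩
    exact ⟨y, _, _, by simp, ⟨x, rfl, rfl⟩, rfl⟩
  · rintro ⟨y, v', s', rfl, ⟨x, rfl, rfl⟩, rfl⟩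
    exact ⟨y, x, rfl, by simp⟩

lemma eqnSolutions_eq_listEqnSolutions {k : ℕ} (u : Fin k → List Γ) (w : List Γ) :
    eqnSolutions u w = listEqnSolutions (List.ofFn u) w := by
  induction k generalizing w with
  | zero =>
    ext s
    simp [eqnSolutions, listEqnSolutions, hashJoin, Fin.exists_fin_succ_pi]
  | succ k ih =>
    rw [← Fin.cons_self_tail u, eqnSolutions_cons, List.ofFn_succ]
    simp only [ih, Fin.cons_zero, Fin.cons_succ, listEqnSolutions]

lemma nil_mem_listEqnSolutions {us : List (List Γ)} {v : List Γ} :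
    [] ∈ listEqnSolutions us v ↔ us = [] ∧ v = [] := by
  cases us <;> simp [listEqnSolutions]

lemma some_cons_mem_listEqnSolutions {us : List (List Γ)} {v : List Γ} {c : Γ}
    {s : List (Option Γ)} :
    some c :: s ∈ listEqnSolutions us v ↔ ∃ v', v = c :: v' ∧ s ∈ listEqnSolutions us v' := by
  cases us with
  | nil => simp [listEqnSolutions, eq_comm, List.map_eq_cons_iff]
  | cons u₀ us =>
    constructor
    · rintro ⟨_ | ⟨c', y⟩, v', s', rfl, hs', hs⟩
      · simp at hs
      · obtain ⟨rfl, rfl⟩ : c = c' ∧ s = y.map some ++ none :: s' := by simpa using hs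
        exact ⟨_, rfl, y, v', s', rfl, hs', rfl⟩
    · rintro ⟨v', rfl, y, v'', s', rfl, hs', rfl⟩
      exact ⟨c :: y, v'', s', rfl, hs', rfl⟩

lemma none_cons_mem_listEqnSolutions {us : List (List Γ)} {v : List Γ} {s : List (Option Γ)} :
    none :: s ∈ listEqnSolutions us v ↔
      ∃ u₀ us' v', us = u₀ :: us' ∧ v = u₀ ++ v' ∧ s ∈ listEqnSolutions us' v' := by
  cases us with
  | nil => cases v <;> simp [listEqnSolutions]
  | cons u₀ us =>
    constructor
    · rintro ⟨_ | ⟨c', y⟩, v', s', rfl, hs', hs⟩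
      · obtain rfl : s = s' := by simpa using hs
        exact ⟨u₀, us, v', rfl, rfl, hs'⟩
      · simp at hs
    · rintro ⟨_, _, v', ⟨rfl, rfl⟩, rfl, hs⟩
      exact ⟨[], v', s, rfl, hs, rfl⟩

end Solutions

section Solver

variable {Γ : Type*}

open Classical in
noncomputable def eqnSolver (us : List (List Γ)) (v : List Γ) :
    PartialDFA (Option Γ) (List (List Γ) × List Γ) where
  step
    | (us', r), some c => (r.dropPrefix? [c]).map (us', ·)
    | (u₀ :: us', r), none => (r.dropPrefix? u₀).map (us', ·)
    | ([], _), none => none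
  start := (us, v)
  accept := {([], [])}

lemma acceptsFrom_eqnSolver (us : List (List Γ)) (v : List Γ) :
    (eqnSolver us v).acceptsFrom = fun q => listEqnSolutions q.1 q.2 := by
  refine PartialDFA.acceptsFrom_eq_of_nil_of_cons _ _ ?_ ?_
  · rintro ⟨us', v'⟩
    simp [eqnSolver, nil_mem_listEqnSolutions]
  · rintro ⟨_ | ⟨u₀, us'⟩, v'⟩ (_ | c) s <;>
      simp [eqnSolver, some_cons_mem_listEqnSolutions, none_cons_mem_listEqnSolutions,
        List.dropPrefix?_eq_some_iff]

lemma eqnSolver_step_suffix {us : List (List Γ)} {v : List Γ} {q q' : List (List Γ) × List Γ}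
    {a : Option Γ} (h : (eqnSolver us v).step q a = some q') : q'.1 <:+ q.1 ∧ q'.2 <:+ q.2 := by
  obtain ⟨_ | ⟨u₀, us'⟩, v'⟩ := q <;> cases a <;>
    simp only [eqnSolver, Option.map_eq_some_iff, List.dropPrefix?_eq_some_iff, beq_iff_eq,
      exists_eq_right, reduceCtorEq] at h <;>
    obtain ⟨v'', rfl, rfl⟩ := h <;>
    simp [List.suffix_cons, List.suffix_append]

end Solver

theorem exists_partialDFA_accepts_listEqnSolutions {Γ : Type} (us : List (List Γ)) (v : List Γ) :
    ∃ (σ : Type) (_ : Fintype σ) (M : PartialDFA (Option Γ) σ),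
      Fintype.card σ ≤ (us.length + 1) * (v.length + 1) ∧ M.accepts = listEqnSolutions us v := by
  classical
  let T := us.tails.toFinset ×ˢ v.tails.toFinset
  have mem_T : ∀ q, q ∈ T ↔ q.1 <:+ us ∧ q.2 <:+ v := by simp [T, List.mem_tails]
  refine ⟨↥(T : Set (List (List Γ) × List Γ)), inferInstance,
    (eqnSolver us v).restrict T ?_ ?_, ?_, ?_⟩
  · exact (mem_T _).2 ⟨List.suffix_refl _, List.suffix_refl _⟩
  · intro q hq a q' h
    have hq := (mem_T q).1 hq
    have h := eqnSolver_step_suffix h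
    exact (mem_T q').2 ⟨h.1.trans hq.1, h.2.trans hq.2⟩
  · refine (Fintype.card_coe T).le.trans ?_
    rw [Finset.card_product]
    refine Nat.mul_le_mul ?_ ?_ <;> exact (List.toFinset_card_le _).trans (List.length_tails _).le
  · rw [PartialDFA.accepts_restrict, PartialDFA.accepts_eq_acceptsFrom_start,
      acceptsFrom_eqnSolver]
    rfl

/-- The solution language of a sequential word equation is regular; moreover it is
recognized by a (partial) deterministic finite automaton with at most
`(k+1)·(|w|+1)` states. -/
theorem eqnSolutions_regular {Γ : Type} (k : ℕ) (u : Fin k → List Γ) (w : List Γ) :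
    Language.IsRegular (eqnSolutions u w) ∧
    ∃ (σ : Type) (_ : Fintype σ) (M : PartialDFA (Option Γ) σ),
      Fintype.card σ ≤ (k + 1) * (w.length + 1) ∧ M.accepts = eqnSolutions u w := by
  obtain ⟨σ, _, M, hcard, hM⟩ := exists_partialDFA_accepts_listEqnSolutions (List.ofFn u) w
  rw [List.length_ofFn] at hcard
  rw [← eqnSolutions_eq_listEqnSolutions] at hM
  exact ⟨hM ▸ M.isRegular_accepts, σ, inferInstance, M, hcard, hM⟩
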